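/- arXiv:1402.6163 — 3 statements merged into one kernel-verified Lean document; each statement's English description precedes it below -/
import Mathlib

section
/- For every real $y > 0$ and natural number $N \ge 1$, $\int_0^\infty t^{-(N+1)}\Big[e^{-yt} - \sum_{j=0}^{N-1} \frac{(-yt)^j}{j!} - \frac{(-yt)^N}{N!} e^{-t}\Big]\,dt = \frac{(-y)^N}{N!}\Big(\sum_{l=1}^{N} \frac{1}{l} - \log y\Big)$. -/
/-!
Taylor's formula with integral remainder, applied to `s ↦ exp (-t s)` on `[0, y]`, turns the
integrand into `(-1)^N / (N-1)! · ∫₀^y (y - s)^(N-1) (e^{-st} - e^{-t}) / t ds`. Integrating first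
in `t` gives Frullani's integral `-log s`; Fubini applies because `e^{-st} - e^{-t}` has constant
sign in `t`, so the integral of its absolute value is `|log s|`, which is integrable in `s`.
Finally `∫₀^y (y - s)^(N-1) log s ds = y^N / N · (log y - H_N)`, via the antiderivative
`A(s) log s - ∫₀^s A(σ)/σ dσ` with `A(s) = (y^N - (y - s)^N) / N`.
-/

open Real Set MeasureTheory Finset
open scoped Nat

theorem exp_mul_sub_sum_range_eq_integral (c x : ℝ) (n : ℕ) :
    exp (c * x) - ∑ k ∈ range (n + 1), (c * x) ^ k / k ! =
      c ^ (n + 1) / n ! * ∫ s in 0..x, (x - s) ^ n * exp (c * s) := by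
  rcases eq_or_ne x 0 with rfl | hx
  · simp [sum_range_succ']
  have hderiv : ∀ k, ∀ s ∈ uIcc 0 x,
      iteratedDerivWithin k (fun s => exp (c * s)) (uIcc 0 x) s = c ^ k * exp (c * s) := by
    intro k s hs
    rw [iteratedDerivWithin_eq_iteratedDeriv (uniqueDiffOn_uIcc hx.symm) (by fun_prop) hs,
      iteratedDeriv_exp_const_mul]
  have h := taylor_integral_remainder (f := fun s => exp (c * s)) (x₀ := 0) (x := x) (n := n)
    (by fun_prop)
  rw [taylor_within_apply, intervalIntegral.integral_congr fun s hs => by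
    simp only [smul_eq_mul]; rw [hderiv _ s hs]] at h
  simp only [hderiv _ 0 left_mem_uIcc, sub_zero, mul_zero, exp_zero, mul_one, smul_eq_mul] at h
  convert h using 2
  · exact sum_congr rfl fun k _ => by ring
  · rw [← intervalIntegral.integral_const_mul]
    exact intervalIntegral.integral_congr fun s _ => by ring

theorem sub_taylor_exp_div_pow_eq_integral {t : ℝ} (ht : t ≠ 0) (y : ℝ) (n : ℕ) :
    (exp (-(y * t)) - ∑ j ∈ range (n + 1), (-(y * t)) ^ j / (j ! : ℝ)
        - (-(y * t)) ^ (n + 1) / ((n + 1)! : ℝ) * exp (-t)) / t ^ (n + 1 + 1) =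
      (-1) ^ (n + 1) / n ! * ∫ s in 0..y, (y - s) ^ n * (t⁻¹ * (exp (-(s * t)) - exp (-t))) := by
  have htaylor := exp_mul_sub_sum_range_eq_integral (-t) y n
  have hsplit : ∫ s in 0..y, (y - s) ^ n * (t⁻¹ * (exp (-(s * t)) - exp (-t))) =
      t⁻¹ * ((∫ s in 0..y, (y - s) ^ n * exp (-t * s)) - exp (-t) * (y ^ (n + 1) / (n + 1))) := by
    have hmoment : ∫ s in 0..y, (y - s) ^ n = y ^ (n + 1) / (n + 1) := by
      simp [intervalIntegral.integral_comp_sub_left (fun s => s ^ n)]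
    rw [← hmoment, ← intervalIntegral.integral_const_mul, ← intervalIntegral.integral_sub
      (by apply Continuous.intervalIntegrable; fun_prop)
      (by apply Continuous.intervalIntegrable; fun_prop), ← intervalIntegral.integral_const_mul]
    exact intervalIntegral.integral_congr fun s _ => by ring_nf
  rw [show -t * y = -(y * t) by ring] at htaylor
  rw [hsplit, htaylor, Nat.factorial_succ]
  push_cast
  field_simp
  ring

theorem exp_neg_mul_sub_exp_neg_mul_nonneg {a b t : ℝ} (hab : a ≤ b) (ht : 0 ≤ t) :
    0 ≤ exp (-(a * t)) - exp (-(b * t)) := by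
  have : a * t ≤ b * t := mul_le_mul_of_nonneg_right hab ht
  simp only [sub_nonneg, exp_le_exp]; linarith

theorem exp_neg_mul_sub_exp_neg_mul_le (a b t : ℝ) :
    exp (-(a * t)) - exp (-(b * t)) ≤ (b - a) * t * exp (-(a * t)) := by
  have h := add_one_le_exp (-((b - a) * t))
  have hsplit : exp (-(b * t)) = exp (-(a * t)) * exp (-((b - a) * t)) := by
    rw [← exp_add]; ring_nf
  rw [hsplit]
  nlinarith [exp_pos (-(a * t))]

theorem integrableOn_inv_mul_exp_neg_mul_sub {a b : ℝ} (ha : 0 < a) (hb : 0 < b) :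
    IntegrableOn (fun t => t⁻¹ * (exp (-(a * t)) - exp (-(b * t)))) (Ioi 0) := by
  wlog hab : a ≤ b generalizing a b
  · refine ((this hb ha (by linarith)).neg).congr_fun (fun t _ => ?_) measurableSet_Ioi
    simp only [Pi.neg_apply]; ring
  refine Integrable.mono' ((exp_neg_integrableOn_Ioi 0 ha).const_mul (b - a)) (by fun_prop) ?_
  filter_upwards [ae_restrict_mem measurableSet_Ioi] with t (ht : 0 < t)
  rw [norm_mul, norm_inv, Real.norm_of_nonneg ht.le,
    Real.norm_of_nonneg (exp_neg_mul_sub_exp_neg_mul_nonneg hab ht.le), inv_mul_le_iff₀ ht]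
  calc _ ≤ (b - a) * t * exp (-(a * t)) := exp_neg_mul_sub_exp_neg_mul_le a b t
    _ = t * ((b - a) * exp (-a * t)) := by ring_nf

theorem integral_inv_mul_exp_neg_mul_sub {a b : ℝ} (ha : 0 < a) (hb : 0 < b) :
    ∫ t in Ioi 0, t⁻¹ * (exp (-(a * t)) - exp (-(b * t))) = log (b / a) := by
  have hcont : Continuous fun x : ℝ => exp (-x) := by fun_prop
  have h := Frullani.integral_Ioi_eq (L := 1) (R := 0)
    (hcont.locallyIntegrable.locallyIntegrableOn _) ha hb
    (by simpa using (hcont.tendsto 0).mono_left nhdsWithin_le_nhds)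
    tendsto_exp_neg_atTop_nhds_zero (integrableOn_inv_mul_exp_neg_mul_sub ha hb)
  simpa using h

theorem integral_norm_inv_mul_exp_neg_mul_sub {a b : ℝ} (ha : 0 < a) (hb : 0 < b) :
    ∫ t in Ioi 0, ‖t⁻¹ * (exp (-(a * t)) - exp (-(b * t)))‖ = |log (b / a)| := by
  wlog hab : a ≤ b generalizing a b
  · rw [← abs_neg, ← log_inv, inv_div, ← this hb ha (by linarith)]
    simp only [norm_mul, norm_sub_rev]
  rw [abs_of_nonneg (log_nonneg ((one_le_div ha).2 hab)), ← integral_inv_mul_exp_neg_mul_sub ha hb]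
  refine setIntegral_congr_fun measurableSet_Ioi fun t (ht : 0 < t) => ?_
  exact Real.norm_of_nonneg (mul_nonneg (inv_nonneg.2 ht.le)
    (exp_neg_mul_sub_exp_neg_mul_nonneg hab ht.le))

theorem integral_Ioi_integral_mul_inv_mul_exp_neg_sub {S : Set ℝ} (hS : MeasurableSet S)
    (hS0 : S ⊆ Ioi 0) {w : ℝ → ℝ} (hw : Measurable w)
    (hwlog : IntegrableOn (fun s => w s * log s) S) :
    ∫ t in Ioi 0, ∫ s in S, w s * (t⁻¹ * (exp (-(s * t)) - exp (-t))) =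
      -∫ s in S, w s * log s := by
  have hint : Integrable (Function.uncurry fun t s => w s * (t⁻¹ * (exp (-(s * t)) - exp (-t))))
      ((volume.restrict (Ioi 0)).prod (volume.restrict S)) := by
    refine (integrable_prod_iff' (by fun_prop)).2 ⟨?_, ?_⟩
    · filter_upwards [ae_restrict_mem hS] with s hs
      simpa using (integrableOn_inv_mul_exp_neg_mul_sub (hS0 hs) one_pos).const_mul (w s)
    · refine IntegrableOn.congr_fun hwlog.norm (fun s hs => ?_) hS
      have := integral_norm_inv_mul_exp_neg_mul_sub (hS0 hs) one_pos
      simp only [one_mul, one_div, log_inv, abs_neg] at this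
      simp only [Function.uncurry_apply_pair, norm_mul (w s)]
      rw [integral_const_mul, this, Real.norm_eq_abs (log s)]
  rw [integral_integral_swap hint, ← integral_neg]
  refine setIntegral_congr_fun hS fun s hs => ?_
  have := integral_inv_mul_exp_neg_mul_sub (hS0 hs) one_pos
  simp only [one_mul, one_div, log_inv] at this
  simp only [integral_const_mul, this, mul_neg]

theorem integral_mul_log_of_hasDerivAt {A a p : ℝ → ℝ} {y : ℝ} (hy : 0 ≤ y)
    (hA : ∀ s, HasDerivAt A (a s) s) (ha : Continuous a) (hp : Continuous p)
    (hAp : ∀ s, A s = s * p s) :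
    ∫ s in 0..y, a s * log s = A y * log y - ∫ s in 0..y, p s := by
  set F : ℝ → ℝ := fun s => A s * log s - ∫ σ in 0..s, p σ
  have hF : Continuous F := by
    have hF' : F = fun s => p s * (s * log s) - ∫ σ in 0..s, p σ := by
      ext s; simp only [F, hAp]; ring
    rw [hF']
    exact (hp.mul continuous_mul_log).sub
      (intervalIntegral.continuous_primitive (fun _ _ => hp.intervalIntegrable _ _) 0)
  have hderiv : ∀ s ∈ Ioo 0 y, HasDerivAt F (a s * log s) s := by
    intro s hs
    refine (((hA s).mul (hasDerivAt_log hs.1.ne')).sub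
      (hp.integral_hasStrictDerivAt 0 s).hasDerivAt).congr_deriv ?_
    rw [hAp]
    field_simp [hs.1.ne']
    ring
  rw [intervalIntegral.integral_eq_sub_of_hasDeriv_right_of_le hy hF.continuousOn
    (fun s hs => (hderiv s hs).hasDerivWithinAt)
    (intervalIntegral.intervalIntegrable_log'.continuousOn_mul ha.continuousOn)]
  simp [F]

theorem integral_sub_pow_mul_log {y : ℝ} (hy : 0 ≤ y) (n : ℕ) :
    ∫ s in 0..y, (y - s) ^ n * log s = y ^ (n + 1) / (n + 1) * (log y - harmonic (n + 1)) := by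
  have hgeom : ∀ s, y ^ (n + 1) - (y - s) ^ (n + 1) =
      s * ∑ k ∈ range (n + 1), (y - s) ^ k * y ^ (n - k) := by
    intro s
    have := geom_sum₂_mul (y - s) y (n + 1)
    simp only [add_tsub_cancel_right] at this
    linear_combination this
  rw [integral_mul_log_of_hasDerivAt hy (A := fun s => (y ^ (n + 1) - (y - s) ^ (n + 1)) / (n + 1))
    (p := fun s => (∑ k ∈ range (n + 1), (y - s) ^ k * y ^ (n - k)) / (n + 1))]
  · have hterm : ∀ k ∈ range (n + 1), ∫ s in 0..y, (y - s) ^ k * y ^ (n - k) =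
        y ^ (n + 1) * (1 / (k + 1)) := by
      intro k hk
      rw [intervalIntegral.integral_mul_const, intervalIntegral.integral_comp_sub_left
        (fun s => s ^ k), integral_pow]
      have : y ^ (k + 1) * y ^ (n - k) = y ^ (n + 1) := by
        rw [← pow_add]; congr 1; have := mem_range.1 hk; omega
      rw [sub_self, zero_pow k.succ_ne_zero, sub_zero, ← this]
      ring
    rw [intervalIntegral.integral_div, intervalIntegral.integral_finsetSum
      (fun k _ => by apply Continuous.intervalIntegrable; fun_prop), sum_congr rfl hterm,
      ← mul_sum, sub_self, zero_pow n.succ_ne_zero, sub_zero, harmonic]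
    push_cast
    simp only [one_div]
    ring
  · intro s
    refine ((((hasDerivAt_id s).const_sub y).pow (n + 1)).const_sub _ |>.div_const _).congr_deriv ?_
    simp only [id, add_tsub_cancel_right]
    push_cast
    field_simp
  · fun_prop
  · fun_prop
  · intro s
    rw [hgeom]; ring

/-- Ruijsenaars' integral identity: for `y > 0` and `N ≥ 1`,
`∫_0^∞ t^{-(N+1)} [e^{-yt} - ∑_{j<N} (-yt)^j/j! - (-yt)^N/N! · e^{-t}] dt
  = (-y)^N/N! (H_N - log y)`. -/
theorem ruijsenaars_integral_identity (y : ℝ) (hy : 0 < y) (N : ℕ) (hN : 1 ≤ N) :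
    ∫ t in Set.Ioi (0 : ℝ),
      (Real.exp (-(y * t)) - ∑ j ∈ Finset.range N, (-(y * t)) ^ j / (Nat.factorial j : ℝ)
        - (-(y * t)) ^ N / (Nat.factorial N : ℝ) * Real.exp (-t)) / t ^ (N + 1) =
    (-y) ^ N / (Nat.factorial N : ℝ) *
      ((∑ l ∈ Finset.Icc 1 N, (1 : ℝ) / l) - Real.log y) := by
  obtain ⟨n, rfl⟩ : ∃ n, N = n + 1 := ⟨N - 1, by omega⟩
  have hlog : IntegrableOn (fun s => (y - s) ^ n * log s) (Ioc 0 y) :=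
    (intervalIntegrable_iff_integrableOn_Ioc_of_le hy.le).1
      (intervalIntegral.intervalIntegrable_log'.continuousOn_mul (by fun_prop))
  calc _ = ∫ t in Ioi 0, (-1) ^ (n + 1) / n ! *
        ∫ s in Ioc 0 y, (y - s) ^ n * (t⁻¹ * (exp (-(s * t)) - exp (-t))) :=
        setIntegral_congr_fun measurableSet_Ioi fun t ht => by
          rw [sub_taylor_exp_div_pow_eq_integral ht.ne', intervalIntegral.integral_of_le hy.le]
    _ = (-1) ^ (n + 1) / n ! * -∫ s in 0..y, (y - s) ^ n * log s := by
        rw [integral_const_mul, integral_Ioi_integral_mul_inv_mul_exp_neg_sub measurableSet_Ioc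
          Ioc_subset_Ioi_self (by fun_prop) hlog, intervalIntegral.integral_of_le hy.le]
    _ = _ := by
        rw [integral_sub_pow_mul_log hy.le, harmonic_eq_sum_Icc, Nat.factorial_succ]
        push_cast
        field_simp
        ring
end

section
/- Let $f(t)$ be given by a power series $f(t) = \sum_{m\ge 0} c_m t^m/m!$ convergent near $0$, and for $x$ real define $B_m(x) = \frac{d^m}{dt^m}\big|_{t=0}[f(t)e^{-xt}]$. Then for any integer $k \ge 1$ and reals $w, a_1, \ldots, a_M$, with $f_a(t) = t^M \prod_{j=1}^M (1-e^{-a_j t})^{-1}$ (extended analytically at $0$) and $B_{M,m}(x\mid a)$ its associated Bernoulli functions, one has $\sum_{p_1,\ldots,p_M = 0}^{k-1} B_{M,m}\Big(w + \frac{\sum_{j=1}^M p_j a_j}{k} \,\Big|\, a\Big) = k^{M-m}\, B_{M,m}(kw \mid a)$. -/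
/-!
With `x_j = e^{-a_j t / k}`, summing geometric series in each `p_j` gives
`∑_p e^{-t ∑_j p_j a_j / k} = ∏_j (1 - e^{-a_j t}) / (1 - e^{-a_j t / k})`, hence for `t ≠ 0`
`∑_p f_a(t) e^{-(w + ∑_j p_j a_j / k) t} = k^M f_a(t / k) e^{-(k w)(t / k)}`.
Both sides are analytic at `0` once `f_a` is replaced by its analytic extension `g`, so they agree
on a whole neighbourhood of `0`. Differentiating `m` times at `0`, the left side gives the sum of
the `B_{M,m}` and the rescaling `t ↦ t / k` on the right contributes the factor `k^{-m}`.
-/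

open Finset Filter Topology

theorem iteratedDeriv_comp_mul_left {𝕜 F : Type*} [NontriviallyNormedField 𝕜]
    [NormedAddCommGroup F] [NormedSpace 𝕜 F] (n : ℕ) (c : 𝕜) (f : 𝕜 → F) (x : 𝕜) :
    iteratedDeriv n (fun y => f (c * y)) x = c ^ n • iteratedDeriv n f (c * x) := by
  induction n generalizing f x with
  | zero => simp
  | succ n ih =>
    have hderiv : deriv (fun y => f (c * y)) = fun y => c • deriv f (c * y) :=
      funext (deriv_comp_mul_left c f)
    rw [iteratedDeriv_succ', hderiv, iteratedDeriv_fun_const_smul_field, ih, iteratedDeriv_succ',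
      smul_smul, pow_succ']

theorem inv_one_sub_pow_mul_geom_sum {K : Type*} [Field K] {x : K} {k : ℕ} (hx : x ^ k ≠ 1) :
    (1 - x ^ k)⁻¹ * ∑ i ∈ range k, x ^ i = (1 - x)⁻¹ := by
  have hprod : (1 - x) * ∑ i ∈ range k, x ^ i ≠ 0 := by
    rw [mul_neg_geom_sum]
    exact sub_ne_zero.2 hx.symm
  rw [← mul_neg_geom_sum, mul_inv, mul_assoc, inv_mul_cancel₀ (right_ne_zero_of_mul hprod),
    mul_one]

theorem prod_inv_one_sub_pow_mul_sum_piFinset {K ι : Type*} [Field K] [Fintype ι] [DecidableEq ι]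
    {x : ι → K} {k : ℕ} (hx : ∀ j, x j ^ k ≠ 1) :
    (∏ j, (1 - x j ^ k)⁻¹) * ∑ p ∈ Fintype.piFinset (fun _ => range k), ∏ j, x j ^ p j =
      ∏ j, (1 - x j)⁻¹ := by
  rw [← prod_univ_sum, ← prod_mul_distrib]
  exact prod_congr rfl fun j _ => inv_one_sub_pow_mul_geom_sum (hx j)

/-- The function `f_a`; at `t = 0` it takes the junk value `0`, not its analytic extension. -/
noncomputable def multipleBernoulliGenFun {M : ℕ} (a : Fin M → ℝ) (t : ℝ) : ℝ :=
  t ^ M * ∏ j, (1 - Real.exp (-(a j * t)))⁻¹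

theorem multipleBernoulliGenFun_mul_sum_exp {M : ℕ} {a : Fin M → ℝ} (ha : ∀ j, a j ≠ 0) {k : ℕ}
    (hk : k ≠ 0) {t : ℝ} (ht : t ≠ 0) :
    multipleBernoulliGenFun a t *
        ∑ p ∈ Fintype.piFinset (fun _ => range k), Real.exp (-((∑ j, (p j : ℝ) * a j) / k * t)) =
      k ^ M * multipleBernoulliGenFun a ((k : ℝ)⁻¹ * t) := by
  have hk' : (k : ℝ) ≠ 0 := Nat.cast_ne_zero.2 hk
  set x : Fin M → ℝ := fun j => Real.exp (-(a j * ((k : ℝ)⁻¹ * t)))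
  have hxk (j : Fin M) : x j ^ k = Real.exp (-(a j * t)) := by
    rw [← Real.exp_nat_mul]
    congr 1
    field_simp
  have hxp (p : Fin M → ℕ) : Real.exp (-((∑ j, (p j : ℝ) * a j) / k * t)) = ∏ j, x j ^ p j := by
    simp_rw [x, ← Real.exp_nat_mul, ← Real.exp_sum]
    congr 1
    rw [sum_div, sum_mul, ← sum_neg_distrib]
    exact sum_congr rfl fun j _ => by ring
  have hx1 (j : Fin M) : x j ^ k ≠ 1 := by
    rw [hxk, Ne, Real.exp_eq_one_iff, neg_eq_zero]
    exact mul_ne_zero (ha j) ht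
  simp_rw [multipleBernoulliGenFun, hxp, ← hxk]
  rw [mul_assoc, prod_inv_one_sub_pow_mul_sum_piFinset hx1, ← mul_assoc, ← mul_pow,
    mul_inv_cancel_left₀ hk']

theorem sum_mul_exp_eventuallyEq_nhdsNE {M : ℕ} {a : Fin M → ℝ} (ha : ∀ j, a j ≠ 0)
    {g : ℝ → ℝ} (hg : g =ᶠ[𝓝[≠] 0] multipleBernoulliGenFun a) {k : ℕ} (hk : k ≠ 0) (w : ℝ) :
    (fun t => ∑ p ∈ Fintype.piFinset (fun _ => range k),
        g t * Real.exp (-((w + (∑ j, (p j : ℝ) * a j) / k) * t))) =ᶠ[𝓝[≠] 0]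
      fun t => k ^ M * (g ((k : ℝ)⁻¹ * t) * Real.exp (-((k * w) * ((k : ℝ)⁻¹ * t)))) := by
  have hk' : (k : ℝ) ≠ 0 := Nat.cast_ne_zero.2 hk
  have hscale : Tendsto (fun t => (k : ℝ)⁻¹ * t) (𝓝[≠] 0) (𝓝[≠] 0) := by
    simpa [Tendsto] using ((Homeomorph.mulLeft₀ _ (inv_ne_zero hk')).map_punctured_nhds_eq 0).le
  filter_upwards [hg, hscale.eventually hg, self_mem_nhdsWithin] with t hgt hgkt ht
  rw [hgt, hgkt, ← mul_assoc, ← multipleBernoulliGenFun_mul_sum_exp ha hk ht, mul_sum, sum_mul]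
  refine sum_congr rfl fun p _ => ?_
  rw [mul_assoc, ← Real.exp_add]
  congr 2
  field_simp
  ring

/-- Multiplication (distribution) relation for the multiple Bernoulli polynomials
`B_{M,m}(x|a)`, defined as `d^m/dt^m |_{t=0} [g(t) e^{-xt}]` where `g` is the analytic
extension at `0` of `f_a(t) = t^M ∏_j (1-e^{-a_j t})^{-1}`. -/
theorem multiple_bernoulli_multiplication (M : ℕ) (a : Fin M → ℝ) (ha : ∀ j, 0 < a j)
    (g : ℝ → ℝ) (hg : AnalyticAt ℝ g 0)
    (hgeq : g =ᶠ[nhdsWithin 0 {(0 : ℝ)}ᶜ] fun t =>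
      t ^ M * ∏ j, (1 - Real.exp (-(a j * t)))⁻¹)
    (B : ℕ → ℝ → ℝ)
    (hB : ∀ m x, B m x = iteratedDeriv m (fun t => g t * Real.exp (-(x * t))) 0)
    (k : ℕ) (hk : 1 ≤ k) (m : ℕ) (w : ℝ) :
    ∑ p ∈ Fintype.piFinset (fun _ : Fin M => Finset.range k),
        B m (w + (∑ j, (p j : ℝ) * a j) / k) =
      (k : ℝ) ^ ((M : ℤ) - (m : ℤ)) * B m (k * w) := by
  have hk0 : k ≠ 0 := by omega
  have hkernel (x : ℝ) : AnalyticAt ℝ (fun t => g t * Real.exp (-(x * t))) 0 :=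
    hg.mul (by fun_prop)
  have hscaled : AnalyticAt ℝ (fun t => (k : ℝ) ^ M * (g ((k : ℝ)⁻¹ * t) *
      Real.exp (-((k * w) * ((k : ℝ)⁻¹ * t))))) 0 :=
    analyticAt_const.mul ((hkernel _).comp_of_eq (by fun_prop) (mul_zero _))
  have hFG := ((Finset.analyticAt_fun_sum _ fun p _ => hkernel _).frequently_eq_iff_eventually_eq
    hscaled).1 (sum_mul_exp_eventuallyEq_nhdsNE (fun j => (ha j).ne') hgeq hk0 w).frequently
  calc ∑ p ∈ Fintype.piFinset (fun _ : Fin M => Finset.range k),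
        B m (w + (∑ j, (p j : ℝ) * a j) / k)
      = iteratedDeriv m (fun t => ∑ p ∈ Fintype.piFinset (fun _ : Fin M => Finset.range k),
          g t * Real.exp (-((w + (∑ j, (p j : ℝ) * a j) / k) * t))) 0 := by
        rw [iteratedDeriv_fun_sum fun p _ => (hkernel _).contDiffAt]
        simp only [hB]
    _ = (k : ℝ) ^ M * ((k : ℝ)⁻¹ ^ m * B m (k * w)) := by
        rw [Filter.EventuallyEq.iteratedDeriv_eq m hFG, iteratedDeriv_const_mul_field,
          iteratedDeriv_comp_mul_left m _ (fun t => g t * Real.exp (-((k * w) * t))), mul_zero,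
          hB, smul_eq_mul]
    _ = (k : ℝ) ^ ((M : ℤ) - (m : ℤ)) * B m (k * w) := by
        rw [zpow_sub₀ (by positivity), zpow_natCast, zpow_natCast, inv_pow]
        ring
end

section
/- Negative moments of the critical distribution: for the probability distribution $M_c$ whose Mellin transform is $\mathbf{E}[M_c^q] = \frac{G(4-2q)}{G(1-q)\,G^2(2-q)\,G(4-q)}$ ($G$ the Barnes G-function), the negative integer moments are given by the finite product $\mathbf{E}[M_c^{-l}] = \prod_{k=0}^{l-1} \frac{(3+l+k)!}{((k+1)!)^2\, k!}$ for every $l \in \mathbb{N}$. In particular, taking this as the definition, one must verify the Barnes G-function identity $\frac{G(4+2l)}{G(1+l)\, G^2(2+l)\, G(4+l)} = \prod_{k=0}^{l-1} \frac{(3+l+k)!}{((k+1)!)^2\, k!}$ for all $l \ge 0$. -/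
/-!
The recursion `G(z+1) = Γ(z) G(z)` together with `G(1) = 1` pins `G` down on the positive
integers: `G(n+1) = ∏_{j<n} j!`. In the quotient, the product up to `3+2l` splits as the product
up to `3+l` (cancelling `G(4+l)`) times `∏_{k<l} (3+l+k)!`, while `G(1+l) = ∏_{k<l} k!` and
`G(2+l) = ∏_{k<l} (k+1)!`, so the quotient collapses termwise.
-/

open Finset Nat

lemma eq_prod_range_factorial_of_gamma_mul (G : ℝ → ℝ) (hG1 : G 1 = 1)
    (hGrec : ∀ z : ℝ, 0 < z → G (z + 1) = Real.Gamma z * G z) (n : ℕ) :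
    G (n + 1) = ∏ j ∈ range n, (j ! : ℝ) := by
  induction n with
  | zero => simpa using hG1
  | succ n ih =>
    rw [cast_succ, hGrec _ (by positivity), Real.Gamma_nat_eq_factorial, ih, prod_range_succ,
      mul_comm]

lemma prod_range_factorial_div (m l : ℕ) :
    (∏ j ∈ range (m + l), (j ! : ℝ)) /
        ((∏ j ∈ range l, (j ! : ℝ)) * (∏ j ∈ range (l + 1), (j ! : ℝ)) ^ 2 *
          ∏ j ∈ range m, (j ! : ℝ)) =
      ∏ k ∈ range l, ((m + k)! : ℝ) / (((k + 1)! : ℝ) ^ 2 * (k ! : ℝ)) := by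
  have hm : (∏ j ∈ range m, (j ! : ℝ)) ≠ 0 := prod_ne_zero_iff.2 fun j _ => by positivity
  rw [prod_range_add, prod_range_succ', factorial_zero, cast_one, mul_one, prod_div_distrib,
    prod_mul_distrib, prod_pow]
  field_simp

/-- Barnes G-function identity underlying the negative moments of the critical
distribution `M_c`: for `G` with `G(1) = 1` and `G(z+1) = Γ(z)G(z)` for `z > 0`,
`G(4+2l)/(G(1+l) G(2+l)² G(4+l)) = ∏_{k=0}^{l-1} (3+l+k)!/((k+1)!² k!)`. -/
theorem critical_negative_moments (G : ℝ → ℝ) (hG1 : G 1 = 1)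
    (hGrec : ∀ z : ℝ, 0 < z → G (z + 1) = Real.Gamma z * G z) (l : ℕ) :
    G (4 + 2 * l) / (G (1 + l) * G (2 + l) ^ 2 * G (4 + l)) =
      ∏ k ∈ Finset.range l,
        (Nat.factorial (3 + l + k) : ℝ) /
          ((Nat.factorial (k + 1) : ℝ) ^ 2 * (Nat.factorial k : ℝ)) := by
  have hG (n : ℕ) := eq_prod_range_factorial_of_gamma_mul G hG1 hGrec n
  have h1 : G (1 + l) = ∏ j ∈ range l, (j ! : ℝ) := by rw [add_comm, hG]
  have h2 : G (2 + l) = ∏ j ∈ range (l + 1), (j ! : ℝ) := by rw [← hG]; push_cast; ring_nf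
  have h3 : G (4 + l) = ∏ j ∈ range (3 + l), (j ! : ℝ) := by rw [← hG]; push_cast; ring_nf
  have h4 : G (4 + 2 * l) = ∏ j ∈ range (3 + l + l), (j ! : ℝ) := by
    rw [← hG]; push_cast; ring_nf
  rw [h1, h2, h3, h4, prod_range_factorial_div]
end
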